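/- arXiv:1302.0793 — 5 statements merged into one kernel-verified Lean document; each statement's English description precedes it below -/
import Mathlib

section
/- For any real numbers V_i, V_j, any D > 0, and any h > 0, the Wang–Peskin–Elston jump rates a_{ij} = (D/h²)·A(V_j − V_i) and a_{ji} = (D/h²)·A(V_i − V_j) satisfy the detailed balance relation a_{ij}·exp(−V_i) = a_{ji}·exp(−V_j). -/
open Real

/-- The Wang–Peskin–Elston weight function: `A(u) = u / (exp u - 1)` for `u ≠ 0`,
and `A(0) = 1`. -/
noncomputable def wpeA (u : ℝ) : ℝ :=
  if u = 0 then 1 else u / (Real.exp u - 1)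

theorem wpeA_neg (u : ℝ) : wpeA (-u) = Real.exp u * wpeA u := by
  rcases eq_or_ne u 0 with rfl | hu
  · simp [wpeA]
  have hsub : Real.exp u - 1 ≠ 0 := sub_ne_zero.mpr (by rwa [Ne, Real.exp_eq_one_iff])
  have hsub' : 1 - Real.exp u ≠ 0 := by rwa [← neg_sub, neg_ne_zero]
  rw [wpeA, wpeA, if_neg (neg_ne_zero.mpr hu), if_neg hu, Real.exp_neg]
  field_simp
  ring

theorem wpe_detailed_balance_general (Vi Vj D h : ℝ) :
    (D / h ^ 2 * wpeA (Vj - Vi)) * Real.exp (-Vi)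
      = (D / h ^ 2 * wpeA (Vi - Vj)) * Real.exp (-Vj) := by
  have hexp : Real.exp (Vj - Vi) * Real.exp (-Vj) = Real.exp (-Vi) := by
    rw [← Real.exp_add]; ring_nf
  rw [← neg_sub Vj Vi, wpeA_neg, ← hexp]
  ring

/-- Detailed balance for the uniform-mesh Wang–Peskin–Elston jump rates:
`a_{ij} exp(-V_i) = a_{ji} exp(-V_j)` where `a_{ij} = (D/h²) A(V_j - V_i)`. -/
theorem wpe_detailed_balance (Vi Vj D h : ℝ) (hD : 0 < D) (hh : 0 < h) :
    (D / h ^ 2 * wpeA (Vj - Vi)) * Real.exp (-Vi)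
      = (D / h ^ 2 * wpeA (Vi - Vj)) * Real.exp (-Vj) :=
  wpe_detailed_balance_general Vi Vj D h
end

section
/- For any real numbers V₀, V_j, any D > 0, and any h₁, h₂, h_j > 0, the non-uniform jump rates a_{0j} = (2D/(h_j(h₁+h₂)))·A(V_j − V₀) and a_{j0} = (D/h_j²)·A(V₀ − V_j) satisfy the discrete detailed balance relation a_{0j}·exp(−V₀)·(h₁+h₂)/2 = a_{j0}·exp(−V_j)·h_j. -/
/-!
Cancelling the mesh factors `(h₁ + h₂)/2` against `2/(h₁ + h₂)` and `h_j` against `1/h_j²`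
reduces detailed balance to `A(V_j - V₀) e^{-V₀} = A(V₀ - V_j) e^{-V_j}`, which is the
reflection identity `A(-u) = eᵘ A(u)` of the Wang–Peskin–Elston weight at `u = V_j - V₀`.
-/

open Real

theorem wpeA_sub_mul_exp_neg (a b : ℝ) :
    wpeA (b - a) * Real.exp (-a) = wpeA (a - b) * Real.exp (-b) := by
  rw [← neg_sub b a, wpeA_neg, mul_comm (Real.exp _), mul_assoc, ← Real.exp_add]
  ring_nf

theorem wpe_nonuniform_detailed_balance_general (V0 Vj D h1 h2 hj : ℝ)
    (hh1 : 0 < h1) (hh2 : 0 < h2) :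
    (2 * D / (hj * (h1 + h2)) * wpeA (Vj - V0)) * Real.exp (-V0) * ((h1 + h2) / 2)
      = (D / hj ^ 2 * wpeA (V0 - Vj)) * Real.exp (-Vj) * hj := by
  have hsum : h1 + h2 ≠ 0 := (add_pos hh1 hh2).ne'
  calc (2 * D / (hj * (h1 + h2)) * wpeA (Vj - V0)) * Real.exp (-V0) * ((h1 + h2) / 2)
      = D / hj * (wpeA (Vj - V0) * Real.exp (-V0)) := by field_simp
    _ = D / hj * (wpeA (V0 - Vj) * Real.exp (-Vj)) := by rw [wpeA_sub_mul_exp_neg]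
    _ = (D / hj ^ 2 * wpeA (V0 - Vj)) * Real.exp (-Vj) * hj := by
      rcases eq_or_ne hj 0 with rfl | hj0
      · simp
      · field_simp

/-- Discrete detailed balance for the non-uniform jump rates:
`a_{0j} = (2D/(h_j(h₁+h₂))) A(V_j - V₀)` and `a_{j0} = (D/h_j²) A(V₀ - V_j)` satisfy
`a_{0j} exp(-V₀) (h₁+h₂)/2 = a_{j0} exp(-V_j) h_j`. -/
theorem wpe_nonuniform_detailed_balance (V0 Vj D h1 h2 hj : ℝ)
    (hD : 0 < D) (hh1 : 0 < h1) (hh2 : 0 < h2) (hhj : 0 < hj) :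
    (2 * D / (hj * (h1 + h2)) * wpeA (Vj - V0)) * Real.exp (-V0) * ((h1 + h2) / 2)
      = (D / hj ^ 2 * wpeA (V0 - Vj)) * Real.exp (-Vj) * hj :=
  wpe_nonuniform_detailed_balance_general V0 Vj D h1 h2 hj hh1 hh2
end

section
/- Let f : ℝ → ℝ be three times differentiable at x₀ (f'' exists in a neighborhood of x₀ and is differentiable at x₀). Then for every ε > 0 there exists δ > 0 such that for all 0 < h₁ < δ and 0 < h₂ < δ, | (2/(h₁+h₂))·[ (f(x₀+h₂) − f(x₀))/h₂ − (f(x₀) − f(x₀−h₁))/h₁ ] − f''(x₀) − ((h₂ − h₁)/3)·f'''(x₀) | ≤ ε·(h₁ + h₂). In particular, the spatial truncation error of the non-uniform three-point second-difference operator is of order h₂ − h₁ at x₀, and the operator is second-order accurate when h₁ = h₂. -/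
/-!
Peano's form of Taylor's theorem gives `f = T + R` with `T` the cubic Taylor polynomial at `x₀`
and `R (x₀ + h) = o(h³)`; it follows by integrating the first-order expansion of `f''` at `x₀`
twice with the mean value inequality. The difference operator is linear, sends `T` exactly to
`f''(x₀) + (h₂ - h₁)/3 · f'''(x₀)`, and sends `R` to at most
`2/(h₁ + h₂) · ε (h₁² + h₂²) ≤ 2ε (h₁ + h₂)`.
-/

open Set Topology
open scoped Nat

section Taylor

variable {E : Type*} [NormedAddCommGroup E] [NormedSpace ℝ E]

theorem hasDerivAt_monomial_smul (v : E) (n : ℕ) (x₀ x : ℝ) :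
    HasDerivAt (fun y ↦ (((n + 1 : ℝ) * n !)⁻¹ * (y - x₀) ^ (n + 1)) • v)
      (((n ! : ℝ)⁻¹ * (x - x₀) ^ n) • v) x := by
  convert ((((hasDerivAt_id' x).sub_const x₀).pow (n + 1)).const_mul
    ((n + 1 : ℝ) * n !)⁻¹).smul_const v using 1
  · rfl
  · rw [Nat.add_sub_cancel]
    push_cast
    field_simp

theorem hasDerivAt_taylorWithinEval_univ (f : ℝ → E) (n : ℕ) (x₀ x : ℝ) :
    HasDerivAt (taylorWithinEval f (n + 1) univ x₀)
      (taylorWithinEval (deriv f) n univ x₀ x) x := by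
  induction n with
  | zero =>
    convert (hasDerivAt_monomial_smul (iteratedDerivWithin 1 f univ x₀) 0 x₀ x).const_add (f x₀)
      using 1
    · ext y; simp [taylorWithinEval_succ]
    · simp
  | succ n ih =>
    convert ih.add (hasDerivAt_monomial_smul (iteratedDerivWithin (n + 2) f univ x₀) (n + 1) x₀ x)
      using 1
    · exact funext fun y ↦ taylorWithinEval_succ f (n + 1) univ x₀ y
    · rw [taylorWithinEval_succ, iteratedDerivWithin_univ, iteratedDerivWithin_univ,
        iteratedDeriv_succ' (n := n + 1), Nat.factorial_succ]
      push_cast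
      rfl

theorem isLittleO_pow_succ_of_eventually_hasDerivAt {f f' : ℝ → E} {x₀ : ℝ} {n : ℕ}
    (hff' : ∀ᶠ x in 𝓝 x₀, HasDerivAt f (f' x) x) (hf' : f' =o[𝓝 x₀] fun x ↦ (x - x₀) ^ n) :
    (fun x ↦ f x - f x₀) =o[𝓝 x₀] fun x ↦ (x - x₀) ^ (n + 1) := by
  obtain ⟨r, hr, hball⟩ := Metric.eventually_nhds_iff_ball.mp hff'
  rw [← nhdsWithin_eq_nhds.mpr (Metric.ball_mem_nhds x₀ hr)] at hf' ⊢
  exact (convex_ball x₀ r).isLittleO_pow_succ_real (Metric.mem_ball_self hr)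
    (fun x hx ↦ (hball x hx).hasDerivWithinAt) hf'

theorem taylor_isLittleO_of_differentiableAt_iteratedDeriv {f : ℝ → E} {x₀ : ℝ} {n : ℕ}
    (hf : ∀ k < n, ∀ᶠ x in 𝓝 x₀, DifferentiableAt ℝ (iteratedDeriv k f) x)
    (hfn : DifferentiableAt ℝ (iteratedDeriv n f) x₀) :
    (fun x ↦ f x - taylorWithinEval f (n + 1) univ x₀ x)
      =o[𝓝 x₀] fun x ↦ (x - x₀) ^ (n + 1) := by
  induction n generalizing f with
  | zero =>
    simpa [taylorWithinEval_succ, sub_sub] using hfn.hasDerivAt.isLittleO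
  | succ n ih =>
    have hderiv : (fun x ↦ deriv f x - taylorWithinEval (deriv f) (n + 1) univ x₀ x)
        =o[𝓝 x₀] fun x ↦ (x - x₀) ^ (n + 1) :=
      ih (fun k hk ↦ by simpa [iteratedDeriv_succ'] using hf (k + 1) (by omega))
        (by simpa [iteratedDeriv_succ'] using hfn)
    have hdiff : ∀ᶠ x in 𝓝 x₀, HasDerivAt (fun y ↦ f y - taylorWithinEval f (n + 2) univ x₀ y)
        (deriv f x - taylorWithinEval (deriv f) (n + 1) univ x₀ x) x := by
      filter_upwards [hf 0 n.succ_pos] with x hx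
      rw [iteratedDeriv_zero] at hx
      exact hx.hasDerivAt.sub (hasDerivAt_taylorWithinEval_univ f (n + 1) x₀ x)
    simpa using isLittleO_pow_succ_of_eventually_hasDerivAt hdiff hderiv

end Taylor

theorem taylorWithinEval_three_univ (f : ℝ → ℝ) (x₀ : ℝ) :
    taylorWithinEval f 3 univ x₀ = fun x ↦ f x₀ + deriv f x₀ * (x - x₀)
      + deriv (deriv f) x₀ * (x - x₀) ^ 2 / 2 + deriv (deriv (deriv f)) x₀ * (x - x₀) ^ 3 / 6 := by
  ext x
  simp [taylor_within_apply, iteratedDeriv_succ, Nat.factorial]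
  ring

noncomputable def nonuniformSecondDiff (f : ℝ → ℝ) (x₀ h₁ h₂ : ℝ) : ℝ :=
  2 / (h₁ + h₂) * ((f (x₀ + h₂) - f x₀) / h₂ - (f x₀ - f (x₀ - h₁)) / h₁)

theorem nonuniformSecondDiff_sub (f g : ℝ → ℝ) (x₀ h₁ h₂ : ℝ) :
    nonuniformSecondDiff (fun x ↦ f x - g x) x₀ h₁ h₂
      = nonuniformSecondDiff f x₀ h₁ h₂ - nonuniformSecondDiff g x₀ h₁ h₂ := by
  unfold nonuniformSecondDiff
  ring

theorem nonuniformSecondDiff_cubic (a b c d x₀ : ℝ) {h₁ h₂ : ℝ} (h₁_pos : 0 < h₁)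
    (h₂_pos : 0 < h₂) :
    nonuniformSecondDiff (fun x ↦ a + b * (x - x₀) + c * (x - x₀) ^ 2 / 2 + d * (x - x₀) ^ 3 / 6)
      x₀ h₁ h₂ = c + (h₂ - h₁) / 3 * d := by
  unfold nonuniformSecondDiff
  field_simp
  ring

theorem abs_nonuniformSecondDiff_le {g : ℝ → ℝ} {x₀ h₁ h₂ C : ℝ} (h₁_pos : 0 < h₁)
    (h₂_pos : 0 < h₂) (hC : 0 ≤ C) (hg₁ : |g (x₀ - h₁) - g x₀| ≤ C * h₁ ^ 3)
    (hg₂ : |g (x₀ + h₂) - g x₀| ≤ C * h₂ ^ 3) :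
    |nonuniformSecondDiff g x₀ h₁ h₂| ≤ 2 * C * (h₁ + h₂) := by
  have hsum : 0 < h₁ + h₂ := add_pos h₁_pos h₂_pos
  calc |nonuniformSecondDiff g x₀ h₁ h₂|
      = 2 / (h₁ + h₂) * |(g (x₀ + h₂) - g x₀) / h₂ + (g (x₀ - h₁) - g x₀) / h₁| := by
        rw [nonuniformSecondDiff, abs_mul, abs_of_pos (by positivity)]
        ring_nf
    _ ≤ 2 / (h₁ + h₂) * (C * h₂ ^ 3 / h₂ + C * h₁ ^ 3 / h₁) := by
        gcongr
        refine (abs_add_le _ _).trans ?_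
        rw [abs_div, abs_div, abs_of_pos h₁_pos, abs_of_pos h₂_pos]
        gcongr
    _ = 2 * C * (h₁ ^ 2 + h₂ ^ 2) / (h₁ + h₂) := by
        field_simp
        ring
    _ ≤ 2 * C * (h₁ + h₂) := by
        rw [div_le_iff₀ hsum]
        nlinarith [mul_nonneg hC (mul_pos h₁_pos h₂_pos).le]

/-- Truncation error of the non-uniform three-point second-difference operator:
if `f''` exists in a neighborhood of `x₀` and is differentiable at `x₀`, then for
every `ε > 0` there is `δ > 0` such that for all `0 < h₁ < δ` and `0 < h₂ < δ`,
the operator differs from `f''(x₀) + ((h₂ - h₁)/3) f'''(x₀)` by at most `ε (h₁ + h₂)`.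
In particular the truncation error is of order `h₂ - h₁`, and the operator is
second-order accurate when `h₁ = h₂`. -/
theorem nonuniform_second_difference_truncation (f : ℝ → ℝ) (x₀ : ℝ)
    (hf : ∀ᶠ x in nhds x₀, DifferentiableAt ℝ f x)
    (hf' : ∀ᶠ x in nhds x₀, DifferentiableAt ℝ (deriv f) x)
    (hf'' : DifferentiableAt ℝ (deriv (deriv f)) x₀) :
    ∀ ε > 0, ∃ δ > 0, ∀ h₁ h₂ : ℝ, 0 < h₁ → h₁ < δ → 0 < h₂ → h₂ < δ →
      |2 / (h₁ + h₂) *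
          ((f (x₀ + h₂) - f x₀) / h₂ - (f x₀ - f (x₀ - h₁)) / h₁)
        - deriv (deriv f) x₀
        - (h₂ - h₁) / 3 * deriv (deriv (deriv f)) x₀|
      ≤ ε * (h₁ + h₂) := by
  intro ε hε
  have htaylor := taylor_isLittleO_of_differentiableAt_iteratedDeriv (f := f) (x₀ := x₀) (n := 2)
    (by intro k hk; interval_cases k <;> simpa [iteratedDeriv_succ]) (by simpa [iteratedDeriv_succ])
  obtain ⟨δ, hδ, hR⟩ := Metric.eventually_nhds_iff.mp (htaylor.def (half_pos hε))
  refine ⟨δ, hδ, fun h₁ h₂ h₁_pos h₁_lt h₂_pos h₂_lt ↦ ?_⟩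
  set R := fun x ↦ f x - taylorWithinEval f 3 univ x₀ x
  have hbound : ∀ y, |y - x₀| < δ → |R y - R x₀| ≤ ε / 2 * |y - x₀| ^ 3 := by
    intro y hy
    simpa [R, abs_pow] using hR hy
  have hR₁ := hbound (x₀ - h₁) (by simpa [abs_of_pos h₁_pos])
  have hR₂ := hbound (x₀ + h₂) (by simpa [abs_of_pos h₂_pos])
  simp only [sub_sub_cancel_left, add_sub_cancel_left, abs_neg, abs_of_pos h₁_pos,
    abs_of_pos h₂_pos] at hR₁ hR₂
  have hR_diff : nonuniformSecondDiff R x₀ h₁ h₂ = nonuniformSecondDiff f x₀ h₁ h₂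
      - (deriv (deriv f) x₀ + (h₂ - h₁) / 3 * deriv (deriv (deriv f)) x₀) := by
    rw [nonuniformSecondDiff_sub, taylorWithinEval_three_univ,
      nonuniformSecondDiff_cubic _ _ _ _ _ h₁_pos h₂_pos]
  calc |nonuniformSecondDiff f x₀ h₁ h₂ - deriv (deriv f) x₀
        - (h₂ - h₁) / 3 * deriv (deriv (deriv f)) x₀|
      = |nonuniformSecondDiff R x₀ h₁ h₂| := by rw [hR_diff, sub_sub]
    _ ≤ 2 * (ε / 2) * (h₁ + h₂) :=
        abs_nonuniformSecondDiff_le h₁_pos h₂_pos (half_pos hε).le hR₁ hR₂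
    _ = ε * (h₁ + h₂) := by ring
end

section
/- For every real a > 0, the series ∑_{m=0}^∞ 1/((2m+1)² + a²) converges and equals (π/(4a))·tanh(πa/2). -/
/-!
Evaluating the Mittag-Leffler expansion of `π cot (π z)` at the imaginary point `z = b i` gives
`∑_{n ≥ 0} 1 / (n² + b²) = (π b coth (π b) + 1) / (2 b²)`. The odd-index part of this series is the
whole series minus its even-index part, and the even-index part is a quarter of the same series at
`b / 2`; the double-angle formula for `tanh` collapses the difference to a single `tanh`.
-/

open Real

theorem Real.hasSum_one_div_nat_succ_sq_add_sq {b : ℝ} (hb : b ≠ 0) :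
    HasSum (fun n : ℕ => 1 / (((n : ℝ) + 1) ^ 2 + b ^ 2))
      ((π * b / tanh (π * b) - 1) / (2 * b ^ 2)) := by
  have hz : (b * Complex.I : ℂ) ∈ Complex.integerComplement := by
    rintro ⟨n, hn⟩
    simpa [eq_comm, hb] using congrArg Complex.im hn
  have hb' : (b : ℂ) ≠ 0 := by exact_mod_cast hb
  -- At `z = b i` the Mittag-Leffler term `2 z / (z² - (n + 1)²)` is `-2 b i / ((n + 1)² + b²)`,
  -- so scaling by `i / (2 b)` makes it real.
  have hterm (n : ℕ) : Complex.I / (2 * b) * cotTerm (b * Complex.I) n =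
      ((1 / (((n : ℝ) + 1) ^ 2 + b ^ 2) : ℝ) : ℂ) := by
    have hprod : (b * Complex.I + (n + 1)) * (b * Complex.I - (n + 1)) =
        -(((n + 1) ^ 2 + b ^ 2 : ℝ) : ℂ) := by
      push_cast
      linear_combination (b : ℂ) ^ 2 * Complex.I_sq
    have h0 : (((n + 1) ^ 2 + b ^ 2 : ℝ) : ℂ) ≠ 0 := by exact_mod_cast (by positivity)
    rw [cotTerm_identity hz, hprod]
    push_cast at h0 ⊢
    field_simp
    rw [Complex.I_sq, neg_neg]
  have hval : Complex.I / (2 * b) * (π * Complex.cot (π * (b * Complex.I)) - 1 / (b * Complex.I)) =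
      (((π * b / tanh (π * b) - 1) / (2 * b ^ 2) : ℝ) : ℂ) := by
    have hs : Real.sinh (π * b) ≠ 0 := by simp [hb, pi_ne_zero]
    rw [show (π : ℂ) * (b * Complex.I) = ((π * b : ℝ) : ℂ) * Complex.I by push_cast; ring,
      Complex.cot, Complex.cos_mul_I, Complex.sin_mul_I, Real.tanh_eq_sinh_div_cosh]
    push_cast
    field_simp
  have hcot := (summable_cotTerm hz).hasSum.mul_left (Complex.I / (2 * b))
  rw [← cot_series_rep' hz, funext hterm, hval] at hcot
  exact Complex.hasSum_ofReal.mp hcot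

theorem Real.hasSum_one_div_nat_sq_add_sq {b : ℝ} (hb : b ≠ 0) :
    HasSum (fun n : ℕ => 1 / ((n : ℝ) ^ 2 + b ^ 2))
      ((π * b / tanh (π * b) + 1) / (2 * b ^ 2)) := by
  rw [← hasSum_nat_add_iff' 1, Finset.sum_range_one, Nat.cast_zero]
  have hval : (π * b / tanh (π * b) + 1) / (2 * b ^ 2) - 1 / (0 ^ 2 + b ^ 2) =
      (π * b / tanh (π * b) - 1) / (2 * b ^ 2) := by
    field_simp
    ring
  rw [hval]
  exact_mod_cast Real.hasSum_one_div_nat_succ_sq_add_sq hb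

theorem HasSum.odd_of_even {G : Type*} [AddCommGroup G] [UniformSpace G] [IsUniformAddGroup G]
    [CompleteSpace G] [T2Space G] {f : ℕ → G} {a b : G} (hf : HasSum f a)
    (he : HasSum (fun k => f (2 * k)) b) : HasSum (fun k => f (2 * k + 1)) (a - b) := by
  have ho := (hf.summable.comp_injective
    ((add_left_injective 1).comp (mul_right_injective₀ two_ne_zero))).hasSum
  rwa [hf.unique (he.even_add_odd ho), add_sub_cancel_left]

theorem Real.tanh_two_mul (x : ℝ) : tanh (2 * x) = 2 * tanh x / (1 + tanh x ^ 2) := by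
  have := cosh_pos x
  rw [tanh_eq_sinh_div_cosh, tanh_eq_sinh_div_cosh, sinh_two_mul, cosh_two_mul]
  field_simp

/-- For `a > 0`, `∑_{m=0}^∞ 1/((2m+1)² + a²) = (π/(4a)) tanh(πa/2)`. -/
theorem sum_inv_odd_sq_add_sq (a : ℝ) (ha : 0 < a) :
    HasSum (fun m : ℕ => 1 / ((2 * (m : ℝ) + 1) ^ 2 + a ^ 2))
      (π / (4 * a) * Real.tanh (π * a / 2)) := by
  set f : ℕ → ℝ := fun n => 1 / ((n : ℝ) ^ 2 + a ^ 2)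
  set S : ℝ → ℝ := fun b => (π * b / tanh (π * b) + 1) / (2 * b ^ 2)
  have hall : HasSum f (S a) := Real.hasSum_one_div_nat_sq_add_sq ha.ne'
  have heven : HasSum (fun k => f (2 * k)) (S (a / 2) / 4) :=
    ((Real.hasSum_one_div_nat_sq_add_sq (half_pos ha).ne').div_const 4).congr_fun fun k => by
      simp only [f]
      push_cast
      field_simp
      ring
  have hval : S a - S (a / 2) / 4 = π / (4 * a) * tanh (π * a / 2) := by
    obtain ⟨x, hx⟩ : ∃ x, π * (a / 2) = x := ⟨_, rfl⟩
    have ht : tanh x ≠ 0 := by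
      simp [← hx, tanh_eq_sinh_div_cosh, ha.ne', pi_ne_zero, (cosh_pos _).ne']
    simp only [S]
    rw [hx, show π * a / 2 = x by rw [← hx]; ring, show π * a = 2 * x by rw [← hx]; ring,
      Real.tanh_two_mul]
    field_simp
    rw [← hx]
    ring
  rw [← hval]
  refine (hall.odd_of_even heven).congr_fun fun m => ?_
  simp only [f]
  push_cast
  ring
end

section
/- For every l > 0 and every x ∈ ℝ, the double series ∑_{n=0}^∞ ∑_{m=0}^∞ (1 − cos((2n+1)πx/l))/( (2n+1)²·((2n+1)² + (2m+1)²) ) converges and equals (π/4)·∑_{n=0}^∞ (1/(2n+1)³)·tanh((π/2)(2n+1))·(1 − cos((2n+1)πx/l)). -/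
/-!
Summing over `m` first, the inner series is a partial-fraction expansion of `tanh`:
`∑ₘ 1 / (a² + (2m+1)²) = π / (4a) · tanh (π a / 2)`. This is the expansion
`∑ₘ 2x / (x² - (2m+1)²) = -(π/2) tan (π x / 2)` at `x = i a`, which in turn comes from the
Mittag-Leffler expansion of `π cot (π x)` by removing the even-indexed terms (the expansion at
`x / 2`) and using `cot θ - 2 cot 2θ = tan θ`. All terms of the double series are nonnegative and
the iterated sum is `O(n⁻³)`, so the series is summable on `ℕ × ℕ` with the iterated sum as value.
-/

open Real

namespace Complex

/-- Where `sin θ cos θ = 0` both sides vanish, by the convention `z / 0 = 0`. -/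
theorem cot_sub_two_mul_cot_two_mul (θ : ℂ) : cot θ - 2 * cot (2 * θ) = tan θ := by
  rw [cot_eq_cos_div_sin, cot_eq_cos_div_sin, tan_eq_sin_div_cos, sin_two_mul, cos_two_mul]
  by_cases hs : sin θ = 0
  · simp [hs]
  by_cases hc : cos θ = 0
  · simp [hc]
  field_simp
  linear_combination -sin_sq_add_cos_sq θ

theorem div_two_mem_integerComplement {x : ℂ} (hx : x ∈ integerComplement) :
    x / 2 ∈ integerComplement := by
  rw [mem_integerComplement_iff] at hx ⊢
  rintro ⟨n, hn⟩
  exact hx ⟨2 * n, by push_cast; rw [hn]; ring⟩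

theorem hasSum_cot_partial_fractions {x : ℂ} (hx : x ∈ integerComplement) :
    HasSum (fun k : ℕ => 2 * x / (x ^ 2 - k ^ 2)) (π * cot (π * x) + 1 / x) := by
  have hx0 : x ≠ 0 := integerComplement.ne_zero hx
  have hcot : HasSum (cotTerm x) (π * cot (π * x) - 1 / x) :=
    (summable_cotTerm hx).hasSum_iff_tendsto_nat.mpr (tendsto_logDeriv_euler_cot_sub hx)
  have hzero : π * cot (π * x) + 1 / x - ∑ k ∈ Finset.range 1, 2 * x / (x ^ 2 - (k : ℂ) ^ 2) =
      π * cot (π * x) - 1 / x := by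
    rw [Finset.sum_range_one, Nat.cast_zero]
    field_simp
    ring
  refine (hasSum_nat_add_iff' 1).mp (hzero ▸ hcot.congr_fun fun n => ?_)
  rw [cotTerm_identity hx n, sq_sub_sq]
  push_cast
  ring

theorem hasSum_tan_partial_fractions {x : ℂ} (hx : x ∈ integerComplement) :
    HasSum (fun m : ℕ => 2 * x / (x ^ 2 - (2 * m + 1) ^ 2)) (-(π / 2 * tan (π * x / 2))) := by
  set F : ℕ → ℂ := fun k => 2 * x / (x ^ 2 - k ^ 2)
  have hx0 : x ≠ 0 := integerComplement.ne_zero hx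
  have hall : HasSum F (π * cot (π * x) + 1 / x) := hasSum_cot_partial_fractions hx
  have heven : HasSum (fun j => F (2 * j)) ((π * cot (π * (x / 2)) + 1 / (x / 2)) / 2) := by
    refine ((hasSum_cot_partial_fractions (div_two_mem_integerComplement hx)).div_const 2).congr_fun
      fun j => ?_
    simp only [F]
    rw [show (x / 2) ^ 2 - (j : ℂ) ^ 2 = (x ^ 2 - ((2 * j : ℕ) : ℂ) ^ 2) / 4 by push_cast; ring,
      div_div_eq_mul_div]
    ring
  have hodd : Summable fun m => F (2 * m + 1) :=
    hall.summable.comp_injective fun a b h => by omega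
  have hodd_sum : ∑' m, F (2 * m + 1) = -(π / 2 * tan (π * x / 2)) := by
    have hsplit := hall.unique (heven.even_add_odd hodd.hasSum)
    have htan := cot_sub_two_mul_cot_two_mul (π * x / 2)
    rw [show 2 * (π * x / 2) = π * x by ring] at htan
    rw [← htan, eq_sub_of_add_eq' hsplit.symm, mul_div_assoc]
    field_simp
    ring
  refine hodd_sum ▸ hodd.hasSum.congr_fun fun m => ?_
  simp only [F]
  push_cast
  rfl

end Complex

open Complex in
theorem hasSum_one_div_sq_add_odd_sq {a : ℝ} (ha : a ≠ 0) :
    HasSum (fun m : ℕ => 1 / (a ^ 2 + (2 * m + 1) ^ 2)) (π / (4 * a) * Real.tanh (π * a / 2)) := by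
  have hx : a * I ∈ integerComplement := by
    rintro ⟨n, hn⟩
    have him := congrArg im hn
    simp only [intCast_im, mul_im, ofReal_re, I_im, mul_one, ofReal_im, I_re, mul_zero,
      add_zero] at him
    exact ha him.symm
  have hval : (-(2 * a * I))⁻¹ * -(π / 2 * tan (π * (a * I) / 2)) =
      ((π / (4 * a) * Real.tanh (π * a / 2) : ℝ) : ℂ) := by
    rw [show (π : ℂ) * (a * I) / 2 = ((π * a / 2 : ℝ) : ℂ) * I by push_cast; ring, tan_mul_I]
    push_cast
    field_simp
    ring
  rw [← hasSum_ofReal, ← hval]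
  refine ((hasSum_tan_partial_fractions hx).mul_left _).congr_fun fun m => ?_
  have hpos : (a : ℂ) ^ 2 + (2 * m + 1) ^ 2 ≠ 0 := by
    exact_mod_cast (by positivity : a ^ 2 + (2 * (m : ℝ) + 1) ^ 2 ≠ 0)
  have ha' : (a : ℂ) ≠ 0 := ofReal_ne_zero.mpr ha
  rw [show ((a : ℂ) * I) ^ 2 - (2 * m + 1) ^ 2 = -((a : ℂ) ^ 2 + (2 * m + 1) ^ 2) by
    rw [mul_pow, I_sq]; ring]
  push_cast
  field_simp

theorem hasSum_tsum_of_nonneg_of_hasSum_fiberwise {α β : Type*} {f : α × β → ℝ} {g : α → ℝ}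
    (hf : 0 ≤ f) (hfib : ∀ a, HasSum (fun b => f (a, b)) (g a)) (hg : Summable g) :
    HasSum f (∑' a, g a) := by
  have hs : Summable f := (summable_prod_of_nonneg hf).mpr
    ⟨fun a => (hfib a).summable, hg.congr fun a => (hfib a).tsum_eq.symm⟩
  exact (hs.hasSum.prod_fiberwise hfib).unique hg.hasSum ▸ hs.hasSum

theorem summable_one_div_two_mul_add_one_pow {p : ℕ} (hp : 1 < p) :
    Summable fun n : ℕ => 1 / (2 * (n : ℝ) + 1) ^ p := by
  have hshift : Summable fun n : ℕ => 1 / ((n : ℝ) + 1) ^ p := by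
    simpa using (summable_nat_add_iff 1).mpr (Real.summable_one_div_nat_pow.mpr hp)
  refine hshift.of_nonneg_of_le (fun n => by positivity) fun n => ?_
  gcongr
  linarith [(n.cast_nonneg : (0 : ℝ) ≤ n)]

theorem hasSum_double_series_odd_of_bounded {c : ℕ → ℝ} {C : ℝ} (hc : ∀ n, 0 ≤ c n)
    (hcC : ∀ n, c n ≤ C) :
    HasSum (fun p : ℕ × ℕ => c p.1 /
        ((2 * (p.1 : ℝ) + 1) ^ 2 * ((2 * (p.1 : ℝ) + 1) ^ 2 + (2 * (p.2 : ℝ) + 1) ^ 2)))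
      (π / 4 * ∑' n : ℕ, 1 / (2 * (n : ℝ) + 1) ^ 3 * tanh (π / 2 * (2 * (n : ℝ) + 1)) * c n) := by
  have hfib : ∀ n : ℕ, HasSum
      (fun m : ℕ => c n / ((2 * (n : ℝ) + 1) ^ 2 * ((2 * (n : ℝ) + 1) ^ 2 + (2 * (m : ℝ) + 1) ^ 2)))
      (π / 4 * (1 / (2 * (n : ℝ) + 1) ^ 3 * tanh (π / 2 * (2 * (n : ℝ) + 1)) * c n)) := by
    intro n
    have hn : 2 * (n : ℝ) + 1 ≠ 0 := by positivity
    have hval : c n / (2 * (n : ℝ) + 1) ^ 2 *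
        (π / (4 * (2 * (n : ℝ) + 1)) * tanh (π * (2 * (n : ℝ) + 1) / 2)) =
        π / 4 * (1 / (2 * (n : ℝ) + 1) ^ 3 * tanh (π / 2 * (2 * (n : ℝ) + 1)) * c n) := by
      rw [mul_div_right_comm π]
      field_simp
    rw [← hval]
    refine ((hasSum_one_div_sq_add_odd_sq hn).mul_left _).congr_fun fun m => ?_
    rw [mul_one_div, div_div]
  have hsummable : Summable fun n : ℕ =>
      1 / (2 * (n : ℝ) + 1) ^ 3 * tanh (π / 2 * (2 * (n : ℝ) + 1)) * c n := by
    refine ((summable_one_div_two_mul_add_one_pow (p := 3) (by norm_num)).mul_left C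
      ).of_norm_bounded fun n => ?_
    have hb : 0 ≤ 1 / (2 * (n : ℝ) + 1) ^ 3 := by positivity
    rw [norm_mul, norm_mul, Real.norm_of_nonneg (hc n), Real.norm_of_nonneg hb]
    calc 1 / (2 * (n : ℝ) + 1) ^ 3 * ‖tanh (π / 2 * (2 * (n : ℝ) + 1))‖ * c n
        ≤ 1 / (2 * (n : ℝ) + 1) ^ 3 * 1 * C := by
          gcongr
          exacts [hc n, (Real.abs_tanh_lt_one _).le, hcC n]
      _ = C * (1 / (2 * (n : ℝ) + 1) ^ 3) := by ring
  rw [← tsum_mul_left]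
  exact hasSum_tsum_of_nonneg_of_hasSum_fiberwise
    (fun p => div_nonneg (hc p.1) (by positivity)) hfib (hsummable.mul_left _)

theorem double_series_reaction_location_general (l x : ℝ) :
    HasSum
      (fun p : ℕ × ℕ =>
        (1 - Real.cos ((2 * (p.1 : ℝ) + 1) * π * x / l)) /
          ((2 * (p.1 : ℝ) + 1) ^ 2 *
            ((2 * (p.1 : ℝ) + 1) ^ 2 + (2 * (p.2 : ℝ) + 1) ^ 2)))
      (π / 4 *
        ∑' n : ℕ, 1 / (2 * (n : ℝ) + 1) ^ 3 *
          Real.tanh (π / 2 * (2 * (n : ℝ) + 1)) *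
          (1 - Real.cos ((2 * (n : ℝ) + 1) * π * x / l))) :=
  hasSum_double_series_odd_of_bounded (C := 2) (fun _ => sub_nonneg.mpr (cos_le_one _))
    fun n => by linarith [neg_one_le_cos ((2 * (n : ℝ) + 1) * π * x / l)]

/-- The double series for the reaction-location CDF:
`∑_{n,m} (1 − cos((2n+1)πx/l))/((2n+1)²((2n+1)² + (2m+1)²))` converges and equals
`(π/4) ∑_n (2n+1)⁻³ tanh((π/2)(2n+1))(1 − cos((2n+1)πx/l))`. -/
theorem double_series_reaction_location (l x : ℝ) (hl : 0 < l) :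
    HasSum
      (fun p : ℕ × ℕ =>
        (1 - Real.cos ((2 * (p.1 : ℝ) + 1) * π * x / l)) /
          ((2 * (p.1 : ℝ) + 1) ^ 2 *
            ((2 * (p.1 : ℝ) + 1) ^ 2 + (2 * (p.2 : ℝ) + 1) ^ 2)))
      (π / 4 *
        ∑' n : ℕ, 1 / (2 * (n : ℝ) + 1) ^ 3 *
          Real.tanh (π / 2 * (2 * (n : ℝ) + 1)) *
          (1 - Real.cos ((2 * (n : ℝ) + 1) * π * x / l))) :=
  double_series_reaction_location_general l x
end
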